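/- arXiv:1303.7182 — 5 statements merged into one kernel-verified Lean document; each statement's English description precedes it below -/
import Mathlib

section
/- Fix κ ∈ (4,8). For all real numbers x_1 < x_2 < x_3 < x_4, the following identity holds: (x_2−x_1)^{2/κ}(x_3−x_1)^{2/κ}(x_3−x_2)^{2/κ}(x_4−x_1)^{1−6/κ}(x_4−x_2)^{1−6/κ}(x_4−x_3)^{1−6/κ} · ∫_{x_1}^{x_2} (u−x_1)^{−4/κ}(x_2−u)^{−4/κ}(x_3−u)^{−4/κ}(x_4−u)^{12/κ−2} du = (x_3−x_1)^{2/κ}(x_4−x_1)^{2/κ}(x_4−x_3)^{2/κ}(x_2−x_1)^{1−6/κ}(x_3−x_2)^{1−6/κ}(x_4−x_2)^{1−6/κ} · ∫_{x_3}^{x_4} (u−x_1)^{−4/κ}(u−x_2)^{12/κ−2}(u−x_3)^{−4/κ}(x_4−u)^{−4/κ} du. (Both integrals converge absolutely since −4/κ > −1. This expresses that the two Coulomb gas formulas for the same four-point conformal block, obtained by placing the conjugate charge at x_4 with integration contour [x_1,x_2] or at x_2 with integration contour [x_3,x_4], define the same function.) -/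
/-!
Let `σ t = a + r / (a - t)` with `r > 0`. This is a Möbius involution, and it satisfies
`|σ t - σ s| = r |t - s| / (|a - t| |a - s|)` and `σ' t = r / (a - t) ^ 2`. Hence, for a product
of powers `∏ |u - σ pᵢ| ^ βᵢ` with `∑ βᵢ = -2`, the substitution `u = σ t` gives a constant
multiple of `∏ |t - pᵢ| ^ βᵢ`: all the powers of `|a - t|` cancel. Choose the pole
`a ∈ (x₂, x₃)` so that `σ` swaps `x₁ ↔ x₃` and `x₂ ↔ x₄`. Then `σ` maps `(x₁, x₂)` increasingly
onto `(x₃, x₄)` and turns the second integrand into the first one. The constant that appears is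
`((x₂ - x₁)(x₃ - x₂) / ((x₄ - x₁)(x₄ - x₃))) ^ (8/κ - 1)`, which is the ratio of the two
prefactors.
-/

open MeasureTheory Set

noncomputable def moebiusInvolution (a r t : ℝ) : ℝ := a + r / (a - t)

section MoebiusInvolution

variable {a r : ℝ}

theorem moebiusInvolution_sub_moebiusInvolution {t s : ℝ} (ht : t ≠ a) (hs : s ≠ a) :
    moebiusInvolution a r t - moebiusInvolution a r s = r * (t - s) / ((a - t) * (a - s)) := by
  have ht' : a - t ≠ 0 := sub_ne_zero.2 ht.symm
  have hs' : a - s ≠ 0 := sub_ne_zero.2 hs.symm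
  unfold moebiusInvolution
  field_simp
  ring

theorem abs_moebiusInvolution_sub_moebiusInvolution (hr : 0 ≤ r) {t s : ℝ} (ht : t ≠ a)
    (hs : s ≠ a) :
    |moebiusInvolution a r t - moebiusInvolution a r s| = r / |a - t| * (|t - s| / |a - s|) := by
  rw [moebiusInvolution_sub_moebiusInvolution ht hs, abs_div, abs_mul, abs_mul, abs_of_nonneg hr]
  ring

theorem moebiusInvolution_moebiusInvolution (hr : r ≠ 0) (t : ℝ) :
    moebiusInvolution a r (moebiusInvolution a r t) = t := by
  unfold moebiusInvolution
  rw [sub_add_cancel_left, div_neg, div_div_cancel₀ hr]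
  ring

theorem moebiusInvolution_eq_of_mul_eq {t u : ℝ} (ht : t ≠ a) (h : (a - t) * (u - a) = r) :
    moebiusInvolution a r t = u := by
  unfold moebiusInvolution
  rw [← h, mul_div_cancel_left₀ _ (sub_ne_zero.2 ht.symm)]
  ring

theorem lt_moebiusInvolution (hr : 0 < r) {t : ℝ} (ht : t < a) : a < moebiusInvolution a r t :=
  lt_add_of_pos_right a (div_pos hr (sub_pos.2 ht))

theorem hasDerivAt_moebiusInvolution {t : ℝ} (ht : t ≠ a) :
    HasDerivAt (moebiusInvolution a r) (r / (a - t) ^ 2) t :=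
  (((hasDerivAt_const t r).fun_div ((hasDerivAt_id' t).const_sub a)
    (sub_ne_zero.2 ht.symm)).const_add a).congr_deriv (by ring)

theorem strictMonoOn_moebiusInvolution (hr : 0 < r) :
    StrictMonoOn (moebiusInvolution a r) (Iio a) := by
  intro t ht s hs hts
  have : 0 < r * (s - t) / ((a - s) * (a - t)) := by
    have := sub_pos.2 hts
    have := sub_pos.2 (mem_Iio.1 hs)
    have := sub_pos.2 (mem_Iio.1 ht)
    positivity
  linarith [moebiusInvolution_sub_moebiusInvolution (r := r) (ne_of_lt hs) (ne_of_lt ht)]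

theorem image_moebiusInvolution_Ioo (hr : 0 < r) {p q : ℝ} (hp : p < a) (hq : q < a) :
    moebiusInvolution a r '' Ioo p q = Ioo (moebiusInvolution a r p) (moebiusInvolution a r q) := by
  have hmono := strictMonoOn_moebiusInvolution (a := a) hr
  ext y
  constructor
  · rintro ⟨t, ⟨hpt, htq⟩, rfl⟩
    have ht : t < a := htq.trans hq
    exact ⟨hmono hp ht hpt, hmono ht hq htq⟩
  · rintro ⟨hpy, hyq⟩
    have hy : a < y := (lt_moebiusInvolution hr hp).trans hpy
    have hσy : moebiusInvolution a r y < a :=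
      add_lt_of_neg_right a (div_neg_of_pos_of_neg hr (sub_neg.2 hy))
    rw [← moebiusInvolution_moebiusInvolution hr.ne' y] at hpy hyq
    exact ⟨_, ⟨(hmono.lt_iff_lt hp hσy).1 hpy, (hmono.lt_iff_lt hσy hq).1 hyq⟩,
      moebiusInvolution_moebiusInvolution hr.ne' y⟩

theorem integral_Ioo_moebiusInvolution {E : Type*} [NormedAddCommGroup E] [NormedSpace ℝ E]
    (hr : 0 < r) {p q : ℝ} (hp : p < a) (hq : q < a) (f : ℝ → E) :
    ∫ u in Ioo (moebiusInvolution a r p) (moebiusInvolution a r q), f u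
      = ∫ t in Ioo p q, (r / (a - t) ^ 2) • f (moebiusInvolution a r t) := by
  have hIoo : Ioo p q ⊆ Iio a := fun t ht => ht.2.trans hq
  rw [← image_moebiusInvolution_Ioo hr hp hq,
    integral_image_eq_integral_abs_deriv_smul measurableSet_Ioo
      (fun t ht => (hasDerivAt_moebiusInvolution (hIoo ht).ne).hasDerivWithinAt)
      ((strictMonoOn_moebiusInvolution hr).injOn.mono hIoo)]
  refine setIntegral_congr_fun measurableSet_Ioo fun t _ => ?_
  rw [abs_of_nonneg (by positivity)]

theorem deriv_mul_prod_abs_moebiusInvolution_sub_rpow (hr : 0 < r) {ι : Type*} (s : Finset ι)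
    {p β : ι → ℝ} (hp : ∀ i ∈ s, p i ≠ a) (hβ : ∑ i ∈ s, β i = -2) {t : ℝ} (ht : t ≠ a) :
    r / (a - t) ^ 2 * ∏ i ∈ s, |moebiusInvolution a r t - moebiusInvolution a r (p i)| ^ β i
      = (r⁻¹ * ∏ i ∈ s, |a - p i| ^ (-β i)) * ∏ i ∈ s, |t - p i| ^ β i := by
  have hat : 0 < |a - t| := abs_pos.2 (sub_ne_zero.2 ht.symm)
  have hfactor : ∀ i ∈ s, |moebiusInvolution a r t - moebiusInvolution a r (p i)| ^ β i
      = (r / |a - t|) ^ β i * (|a - p i| ^ (-β i) * |t - p i| ^ β i) := by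
    intro i hi
    rw [abs_moebiusInvolution_sub_moebiusInvolution hr.le ht (hp i hi),
      Real.mul_rpow (by positivity) (by positivity), Real.div_rpow (abs_nonneg _) (abs_nonneg _),
      Real.rpow_neg (abs_nonneg _)]
    ring
  have hjac : r / (a - t) ^ 2 * (r / |a - t|) ^ (-2 : ℝ) = r⁻¹ := by
    rw [Real.rpow_neg (by positivity), Real.rpow_two, div_pow, sq_abs]
    field_simp
  rw [Finset.prod_congr rfl hfactor, Finset.prod_mul_distrib, Finset.prod_mul_distrib,
    ← Real.rpow_sum_of_pos (by positivity), hβ, ← hjac]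
  ring

end MoebiusInvolution

section FourPoints

variable {x₁ x₂ x₃ x₄ : ℝ}

/-- `a` has the same power with respect to both pairs, so the involution with pole `a` and
`r = (a - x₁) * (x₃ - a)` swaps `x₁ ↔ x₃` and `x₂ ↔ x₄`. -/
theorem exists_mem_Ioo_mul_eq_mul (h12 : x₁ < x₂) (h23 : x₂ < x₃) (h34 : x₃ < x₄) :
    ∃ a ∈ Ioo x₂ x₃, (a - x₁) * (x₃ - a) = (a - x₂) * (x₄ - a) := by
  have hD : 0 < x₂ + x₄ - x₁ - x₃ := by linarith
  refine ⟨(x₂ * x₄ - x₁ * x₃) / (x₂ + x₄ - x₁ - x₃), ⟨?_, ?_⟩, ?_⟩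
  · rw [lt_div_iff₀ hD]; nlinarith
  · rw [div_lt_iff₀ hD]; nlinarith
  · field_simp; ring

theorem integral_Ioo_four_point_moebiusInvolution {a r : ℝ} (hr : 0 < r) (h12 : x₁ < x₂)
    (h2a : x₂ < a) (hσ₁ : moebiusInvolution a r x₁ = x₃) (hσ₂ : moebiusInvolution a r x₂ = x₄)
    {β₁ β₂ β₃ β₄ : ℝ} (hβ : β₁ + β₂ + β₃ + β₄ = -2) :
    ∫ u in Ioo x₃ x₄, (u - x₁) ^ β₁ * (u - x₂) ^ β₂ * (u - x₃) ^ β₃ * (x₄ - u) ^ β₄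
      = r⁻¹ * ((x₃ - a) ^ (-β₁) * (x₄ - a) ^ (-β₂) * (a - x₁) ^ (-β₃) * (a - x₂) ^ (-β₄))
        * ∫ t in Ioo x₁ x₂, (t - x₁) ^ β₃ * (x₂ - t) ^ β₄ * (x₃ - t) ^ β₁ * (x₄ - t) ^ β₂ := by
  have h1a := h12.trans h2a
  have ha3 : a < x₃ := hσ₁ ▸ lt_moebiusInvolution hr h1a
  have ha4 : a < x₄ := hσ₂ ▸ lt_moebiusInvolution hr h2a
  have hσ₃ : moebiusInvolution a r x₃ = x₁ := hσ₁ ▸ moebiusInvolution_moebiusInvolution hr.ne' x₁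
  have hσ₄ : moebiusInvolution a r x₄ = x₂ := hσ₂ ▸ moebiusInvolution_moebiusInvolution hr.ne' x₂
  set p : Fin 4 → ℝ := ![x₃, x₄, x₁, x₂]
  set β : Fin 4 → ℝ := ![β₁, β₂, β₃, β₄]
  have hp : ∀ i ∈ Finset.univ, p i ≠ a := by
    intro i _
    fin_cases i
    exacts [ha3.ne', ha4.ne', h1a.ne, h2a.ne]
  have hf : EqOn (fun t => (t - x₁) ^ β₃ * (x₂ - t) ^ β₄ * (x₃ - t) ^ β₁ * (x₄ - t) ^ β₂)
      (fun t => ∏ i, |t - p i| ^ β i) (Ioo x₁ x₂) := by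
    intro t ⟨h1t, ht2⟩
    simp (disch := grind) only [p, β, Fin.prod_univ_four, Matrix.cons_val, abs_of_pos,
      abs_of_neg, neg_sub]
    ring
  have hg : EqOn (fun u => (u - x₁) ^ β₁ * (u - x₂) ^ β₂ * (u - x₃) ^ β₃ * (x₄ - u) ^ β₄)
      (fun u => ∏ i, |u - moebiusInvolution a r (p i)| ^ β i) (Ioo x₃ x₄) := by
    intro u ⟨h3u, hu4⟩
    simp (disch := grind) only [p, β, Fin.prod_univ_four, Matrix.cons_val, hσ₁, hσ₂, hσ₃, hσ₄,
      abs_of_pos, abs_of_neg, neg_sub]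
  have hK : ∏ i, |a - p i| ^ (-β i)
      = (x₃ - a) ^ (-β₁) * (x₄ - a) ^ (-β₂) * (a - x₁) ^ (-β₃) * (a - x₂) ^ (-β₄) := by
    simp (disch := grind) only [p, β, Fin.prod_univ_four, Matrix.cons_val, abs_of_pos,
      abs_of_neg, neg_sub]
  have hchange := integral_Ioo_moebiusInvolution hr h1a h2a
    (fun u => ∏ i, |u - moebiusInvolution a r (p i)| ^ β i)
  rw [hσ₁, hσ₂] at hchange
  rw [setIntegral_congr_fun measurableSet_Ioo hf, setIntegral_congr_fun measurableSet_Ioo hg,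
    hchange, ← hK, ← integral_const_mul]
  refine setIntegral_congr_fun measurableSet_Ioo fun t ht => ?_
  refine deriv_mul_prod_abs_moebiusInvolution_sub_rpow hr _ hp ?_ (ht.2.trans h2a).ne
  simp [β, Fin.sum_univ_four, hβ]

theorem four_point_prefactor_eq (κ : ℝ) {a r : ℝ} (h12 : x₁ < x₂) (h2a : x₂ < a)
    (ha3 : a < x₃) (h34 : x₃ < x₄) (hr₁ : (a - x₁) * (x₃ - a) = r)
    (hr₂ : (a - x₂) * (x₄ - a) = r) :
    (x₂ - x₁) ^ (2/κ) * (x₃ - x₁) ^ (2/κ) * (x₃ - x₂) ^ (2/κ)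
        * (x₄ - x₁) ^ (1 - 6/κ) * (x₄ - x₂) ^ (1 - 6/κ) * (x₄ - x₃) ^ (1 - 6/κ)
      = (x₃ - x₁) ^ (2/κ) * (x₄ - x₁) ^ (2/κ) * (x₄ - x₃) ^ (2/κ)
        * (x₂ - x₁) ^ (1 - 6/κ) * (x₃ - x₂) ^ (1 - 6/κ) * (x₄ - x₂) ^ (1 - 6/κ)
        * (r⁻¹ * ((x₃ - a) ^ (4/κ) * (x₄ - a) ^ (2 - 12/κ)
          * (a - x₁) ^ (4/κ) * (a - x₂) ^ (4/κ))) := by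
  have h21 := sub_pos.2 h12
  have h31 : 0 < x₃ - x₁ := by linarith
  have h32 : 0 < x₃ - x₂ := by linarith
  have h41 : 0 < x₄ - x₁ := by linarith
  have h42 : 0 < x₄ - x₂ := by linarith
  have h43 := sub_pos.2 h34
  have ha1 : 0 < a - x₁ := by linarith
  have ha2 := sub_pos.2 h2a
  have h3a := sub_pos.2 ha3
  have h4a : 0 < x₄ - a := by linarith
  subst hr₁
  have hcross : (x₂ - x₁) * (x₃ - x₂) * (x₄ - a) = (a - x₂) * ((x₄ - x₁) * (x₄ - x₃)) := by
    linear_combination (x₂ - x₄) * hr₂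
  have hlog := congrArg Real.log hr₂
  have hlog_cross := congrArg Real.log hcross
  simp (disch := positivity) only [Real.log_mul] at hlog hlog_cross
  refine Real.log_injOn_pos (mem_Ioi.2 (by positivity)) (mem_Ioi.2 (by positivity)) ?_
  simp (disch := positivity) only [Real.log_mul, Real.log_rpow, Real.log_inv]
  linear_combination (8/κ - 1) * hlog_cross + (4/κ - 1) * hlog

end FourPoints

theorem four_point_conjugate_charge_identity_general
    (κ : ℝ)
    (x₁ x₂ x₃ x₄ : ℝ) (h12 : x₁ < x₂) (h23 : x₂ < x₃) (h34 : x₃ < x₄) :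
    (x₂ - x₁) ^ (2/κ) * (x₃ - x₁) ^ (2/κ) * (x₃ - x₂) ^ (2/κ)
        * (x₄ - x₁) ^ (1 - 6/κ) * (x₄ - x₂) ^ (1 - 6/κ) * (x₄ - x₃) ^ (1 - 6/κ)
        * ∫ u in x₁..x₂,
            (u - x₁) ^ (-(4/κ)) * (x₂ - u) ^ (-(4/κ)) * (x₃ - u) ^ (-(4/κ))
              * (x₄ - u) ^ (12/κ - 2)
      = (x₃ - x₁) ^ (2/κ) * (x₄ - x₁) ^ (2/κ) * (x₄ - x₃) ^ (2/κ)
        * (x₂ - x₁) ^ (1 - 6/κ) * (x₃ - x₂) ^ (1 - 6/κ) * (x₄ - x₂) ^ (1 - 6/κ)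
        * ∫ u in x₃..x₄,
            (u - x₁) ^ (-(4/κ)) * (u - x₂) ^ (12/κ - 2) * (u - x₃) ^ (-(4/κ))
              * (x₄ - u) ^ (-(4/κ)) := by
  obtain ⟨a, ⟨h2a, ha3⟩, ha⟩ := exists_mem_Ioo_mul_eq_mul h12 h23 h34
  obtain ⟨r, hr₁⟩ : ∃ r, (a - x₁) * (x₃ - a) = r := ⟨_, rfl⟩
  have hr₂ : (a - x₂) * (x₄ - a) = r := ha ▸ hr₁
  have hr : 0 < r := hr₁ ▸ mul_pos (by linarith) (by linarith)
  have hI := integral_Ioo_four_point_moebiusInvolution hr h12 h2a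
    (moebiusInvolution_eq_of_mul_eq (by linarith) hr₁) (moebiusInvolution_eq_of_mul_eq h2a.ne hr₂)
    (β₁ := -(4/κ)) (β₂ := 12/κ - 2) (β₃ := -(4/κ)) (β₄ := -(4/κ)) (by ring)
  rw [neg_neg, neg_sub] at hI
  rw [intervalIntegral.integral_of_le h12.le, intervalIntegral.integral_of_le h34.le,
    integral_Ioc_eq_integral_Ioo, integral_Ioc_eq_integral_Ioo, hI,
    four_point_prefactor_eq κ h12 h2a ha3 h34 hr₁ hr₂]
  ring

/-- the two Coulomb gas formulas for the same four-point conformal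
block — conjugate charge at x₄ with integration contour [x₁,x₂], or conjugate
charge at x₂ with integration contour [x₃,x₄] — define the same function. -/
theorem four_point_conjugate_charge_identity
    (κ : ℝ) (hκ : κ ∈ Set.Ioo (4:ℝ) 8)
    (x₁ x₂ x₃ x₄ : ℝ) (h12 : x₁ < x₂) (h23 : x₂ < x₃) (h34 : x₃ < x₄) :
    (x₂ - x₁) ^ (2/κ) * (x₃ - x₁) ^ (2/κ) * (x₃ - x₂) ^ (2/κ)
        * (x₄ - x₁) ^ (1 - 6/κ) * (x₄ - x₂) ^ (1 - 6/κ) * (x₄ - x₃) ^ (1 - 6/κ)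
        * ∫ u in x₁..x₂,
            (u - x₁) ^ (-(4/κ)) * (x₂ - u) ^ (-(4/κ)) * (x₃ - u) ^ (-(4/κ))
              * (x₄ - u) ^ (12/κ - 2)
      = (x₃ - x₁) ^ (2/κ) * (x₄ - x₁) ^ (2/κ) * (x₄ - x₃) ^ (2/κ)
        * (x₂ - x₁) ^ (1 - 6/κ) * (x₃ - x₂) ^ (1 - 6/κ) * (x₄ - x₂) ^ (1 - 6/κ)
        * ∫ u in x₃..x₄,
            (u - x₁) ^ (-(4/κ)) * (u - x₂) ^ (12/κ - 2) * (u - x₃) ^ (-(4/κ))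
              * (x₄ - u) ^ (-(4/κ)) :=
  four_point_conjugate_charge_identity_general κ x₁ x₂ x₃ x₄ h12 h23 h34
end

section
/- Let K ≥ 2 be an integer, let i ∈ {1,…,K−1}, and let β_1,…,β_K be real numbers with β_i > −1 and β_{i+1} > −1. Fix real numbers x_1 < ⋯ < x_i and x_{i+2} < ⋯ < x_K with x_i < x_{i+2}, and for x_{i+1} ∈ (x_i, x_{i+2}) define I(x_{i+1}) = ∫_{x_i}^{x_{i+1}} ∏_{j=1}^K |u−x_j|^{β_j} du. Then, as x_{i+1} → x_i from the right, I(x_{i+1}) / (x_{i+1}−x_i)^{β_i+β_{i+1}+1} converges to [Γ(β_i+1)Γ(β_{i+1}+1)/Γ(β_i+β_{i+1}+2)] · ∏_{j≠i,i+1} |x_i−x_j|^{β_j}. -/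
open MeasureTheory Filter Set Finset
open scoped Topology

lemma betaInt' {p q : ℝ} (hp : -1 < p) (hq : -1 < q) :
    IntervalIntegrable (fun s : ℝ => s ^ p * (1 - s) ^ q) volume 0 1 := by
  have h1 : IntervalIntegrable (fun s : ℝ => s ^ p * (1 - s) ^ q) volume 0 (1/2) := by
    apply (intervalIntegral.intervalIntegrable_rpow' hp).mul_continuousOn
    apply ContinuousOn.rpow_const (by fun_prop)
    intro s hs
    rw [Set.uIcc_of_le (by norm_num : (0:ℝ) ≤ 1/2)] at hs
    left
    intro hcon
    rw [sub_eq_zero] at hcon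
    linarith [hs.2]
  have h2' : IntervalIntegrable (fun s : ℝ => (1 - s) ^ q) volume (1/2) 1 := by
    have := (intervalIntegral.intervalIntegrable_rpow' hq (a := 1/2) (b := 0)).comp_sub_left 1
    norm_num at this
    exact this
  have h2 : IntervalIntegrable (fun s : ℝ => s ^ p * (1 - s) ^ q) volume (1/2) 1 := by
    apply h2'.continuousOn_mul
    apply ContinuousOn.rpow_const (by fun_prop)
    intro s hs
    rw [Set.uIcc_of_le (by norm_num : (1/2:ℝ) ≤ 1)] at hs
    left
    intro hcon
    rw [hcon] at hs
    linarith [hs.1]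
  exact h1.trans h2

lemma betaVal' {p q : ℝ} (hp : 0 < p) (hq : 0 < q) :
    ∫ s in (0:ℝ)..1, s ^ (p - 1) * (1 - s) ^ (q - 1)
      = Real.Gamma p * Real.Gamma q / Real.Gamma (p + q) := by
  have hpq : (0:ℝ) < p + q := by linarith
  have key := Complex.Gamma_mul_Gamma_eq_betaIntegral (s := (p : ℂ)) (t := (q : ℂ))
    (by simpa using hp) (by simpa using hq)
  have hint : Complex.betaIntegral p q
      = ((∫ s in (0:ℝ)..1, s ^ (p - 1) * (1 - s) ^ (q - 1) : ℝ) : ℂ) := by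
    rw [Complex.betaIntegral, ← intervalIntegral.integral_ofReal]
    refine intervalIntegral.integral_congr fun s hs => ?_
    rw [Set.uIcc_of_le (by norm_num : (0:ℝ) ≤ 1)] at hs
    rw [Complex.ofReal_mul, Complex.ofReal_cpow hs.1,
      Complex.ofReal_cpow (by linarith [hs.2] : (0:ℝ) ≤ 1 - s)]
    push_cast
    ring
  rw [hint, Complex.Gamma_ofReal, Complex.Gamma_ofReal,
    (by push_cast; ring : ((p:ℂ) + q) = ((p + q : ℝ) : ℂ)), Complex.Gamma_ofReal] at key
  have keyR : Real.Gamma p * Real.Gamma q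
      = Real.Gamma (p + q) * ∫ s in (0:ℝ)..1, s ^ (p - 1) * (1 - s) ^ (q - 1) := by
    exact_mod_cast key
  have hγ : Real.Gamma (p + q) ≠ 0 := (Real.Gamma_pos_of_pos hpq).ne'
  rw [eq_div_iff hγ, keyR]
  ring

lemma affineKey' {a t : ℝ} (ht : a < t) (p q : ℝ) (g : ℝ → ℝ) :
    (∫ u in a..t, |u - a| ^ p * |u - t| ^ q * g u)
      = (t - a) ^ (p + q + 1)
        * ∫ s in (0:ℝ)..1, s ^ p * (1 - s) ^ q * g (a + (t - a) * s) := by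
  have h0 : (0:ℝ) < t - a := sub_pos.2 ht
  have hc : t - a ≠ 0 := h0.ne'
  have h1 := intervalIntegral.integral_comp_mul_add
    (f := fun u => |u - a| ^ p * |u - t| ^ q * g u) (a := 0) (b := 1) hc a
  simp only [mul_zero, zero_add, mul_one, sub_add_cancel] at h1
  have h2 : (∫ u in a..t, |u - a| ^ p * |u - t| ^ q * g u)
      = (t - a) * ∫ s in (0:ℝ)..1,
          |(t - a) * s + a - a| ^ p * |(t - a) * s + a - t| ^ q * g ((t - a) * s + a) := by
    rw [h1, smul_eq_mul, ← mul_assoc, mul_inv_cancel₀ hc, one_mul]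
  rw [h2]
  have h3 : ∀ s ∈ Set.uIcc (0:ℝ) 1,
      |(t - a) * s + a - a| ^ p * |(t - a) * s + a - t| ^ q * g ((t - a) * s + a)
        = (t - a) ^ p * (t - a) ^ q * (s ^ p * (1 - s) ^ q * g (a + (t - a) * s)) := by
    intro s hs
    rw [Set.uIcc_of_le (by norm_num : (0:ℝ) ≤ 1)] at hs
    have e1 : (t - a) * s + a - a = (t - a) * s := by ring
    have e2 : (t - a) * s + a - t = -((t - a) * (1 - s)) := by ring
    have e3 : (t - a) * s + a = a + (t - a) * s := by ring
    rw [e1, e2, e3, abs_neg, abs_of_nonneg (mul_nonneg h0.le hs.1),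
      abs_of_nonneg (mul_nonneg h0.le (by linarith [hs.2] : (0:ℝ) ≤ 1 - s)),
      Real.mul_rpow h0.le hs.1, Real.mul_rpow h0.le (by linarith [hs.2] : (0:ℝ) ≤ 1 - s)]
    ring
  rw [intervalIntegral.integral_congr h3, intervalIntegral.integral_const_mul, ← mul_assoc,
    Real.rpow_add h0, Real.rpow_add h0, Real.rpow_one]
  ring

/-- asymptotic behavior of the Coulomb gas integral over the
collapsing interval (x_i, x_{i+1}) as x_{i+1} → x_i from the right (the second
case of interval collapse).  Points and exponents are 1-indexed: the varying
point x_{i+1} is represented by `t`, via `Function.update x (i+1) t`. -/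
theorem interval_collapse_case_two
    (K : ℕ) (hK : 2 ≤ K) (i : ℕ) (hi1 : 1 ≤ i) (hi2 : i ≤ K - 1)
    (β : ℕ → ℝ) (hβi : -1 < β i) (hβi1 : -1 < β (i+1))
    (x : ℕ → ℝ)
    (hx : ∀ j k, 1 ≤ j → j < k → k ≤ K → j ≠ i+1 → k ≠ i+1 → x j < x k) :
    Tendsto
      (fun t : ℝ =>
        (∫ u in (x i)..t, ∏ j ∈ Finset.Icc 1 K, |u - Function.update x (i+1) t j| ^ β j)
          / (t - x i) ^ (β i + β (i+1) + 1))
      (nhdsWithin (x i) (Set.Ioi (x i)))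
      (nhds (Real.Gamma (β i + 1) * Real.Gamma (β (i+1) + 1)
          / Real.Gamma (β i + β (i+1) + 2)
        * ∏ j ∈ ((Finset.Icc 1 K).erase i).erase (i+1), |x i - x j| ^ β j)) := by
  have hiK' : i + 1 ≤ K := by omega
  set a := x i with ha
  set p := β i with hp
  set q := β (i+1) with hq
  set S := ((Finset.Icc 1 K).erase i).erase (i+1) with hS
  have hiK : i ∈ Finset.Icc 1 K := by simp only [Finset.mem_Icc]; omega
  have hi1mem : i + 1 ∈ (Finset.Icc 1 K).erase i := by
    simp only [Finset.mem_erase, Finset.mem_Icc]; omega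
  -- x j ≠ a for j ∈ S
  have hne : ∀ j ∈ S, x j ≠ a := by
    intro j hj
    simp only [hS, Finset.mem_erase, Finset.mem_Icc] at hj
    obtain ⟨hji1, hji, hj1, hjK⟩ := hj
    rcases Nat.lt_or_ge j i with h | h
    · exact (hx j i hj1 h (by omega) hji1 (by omega)).ne
    · exact (hx i j hi1 (by omega) hjK (by omega) hji1).ne'
  -- δ
  set T := insert (1:ℝ) (S.image fun j => |a - x j|) with hT
  have hTne : T.Nonempty := Finset.insert_nonempty _ _
  set m := T.min' hTne with hm
  have hmpos : 0 < m := by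
    rw [hm, Finset.lt_min'_iff]
    intro b hb
    rcases Finset.mem_insert.1 hb with rfl | hb
    · norm_num
    · obtain ⟨j, hj, rfl⟩ := Finset.mem_image.1 hb
      exact abs_pos.2 (sub_ne_zero.2 (Ne.symm (hne j hj)))
  have hmle : ∀ j ∈ S, m ≤ |a - x j| := fun j hj =>
    T.min'_le _ (Finset.mem_insert_of_mem (Finset.mem_image_of_mem _ hj))
  set δ := m / 2 with hδ
  have hδpos : 0 < δ := by positivity
  -- base nonzero
  have hbase : ∀ j ∈ S, ∀ t ∈ Set.Icc a (a + δ), ∀ s ∈ Set.Icc (0:ℝ) 1,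
      a + (t - a) * s - x j ≠ 0 := by
    intro j hj t ht s hs h
    have e : x j - a = (t - a) * s := by linarith
    have h1 : (t - a) * s ≤ δ := by nlinarith [ht.1, ht.2, hs.1, hs.2]
    have h2 := hmle j hj
    rw [abs_sub_comm, e, abs_of_nonneg (by nlinarith [ht.1, hs.1] : (0:ℝ) ≤ (t - a) * s)] at h2
    linarith
  -- bound
  have hGcont : ContinuousOn (fun ts : ℝ × ℝ => ∏ j ∈ S, |a + (ts.1 - a) * ts.2 - x j| ^ β j)
      (Set.Icc a (a + δ) ×ˢ Set.Icc (0:ℝ) 1) := by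
    apply continuousOn_finset_prod
    intro j hj
    apply ContinuousOn.rpow_const (by fun_prop)
    rintro ⟨t, s⟩ ⟨ht, hs⟩
    exact Or.inl (abs_ne_zero.2 (hbase j hj t ht s hs))
  obtain ⟨M, hM⟩ := (isCompact_Icc.prod isCompact_Icc).exists_bound_of_continuousOn hGcont
  have hmemD : ((a, 0) : ℝ × ℝ) ∈ Set.Icc a (a + δ) ×ˢ Set.Icc (0:ℝ) 1 :=
    ⟨⟨le_refl a, by linarith⟩, ⟨le_refl 0, by norm_num⟩⟩
  have hM0 : 0 ≤ M := le_trans (norm_nonneg _) (hM _ hmemD)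
  have hmemIoo : Set.Ioo a (a + δ) ∈ nhdsWithin a (Set.Ioi a) :=
    Ioo_mem_nhdsGT_of_mem ⟨le_refl a, by linarith⟩
  -- DCT
  have hDCT : Tendsto
      (fun t => ∫ s in (0:ℝ)..1, s ^ p * (1 - s) ^ q * ∏ j ∈ S, |a + (t - a) * s - x j| ^ β j)
      (nhdsWithin a (Set.Ioi a))
      (𝓝 (∫ s in (0:ℝ)..1, s ^ p * (1 - s) ^ q * ∏ j ∈ S, |a - x j| ^ β j)) := by
    apply intervalIntegral.tendsto_integral_filter_of_dominated_convergence
      (bound := fun s => s ^ p * (1 - s) ^ q * M)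
    · filter_upwards with t
      apply Measurable.aestronglyMeasurable
      fun_prop
    · filter_upwards [hmemIoo] with t ht
      refine ae_of_all _ fun s hs => ?_
      rw [Set.uIoc_of_le (by norm_num : (0:ℝ) ≤ 1)] at hs
      have hs0 : (0:ℝ) ≤ s := hs.1.le
      have hs1 : s ≤ 1 := hs.2
      have hGb : |∏ j ∈ S, |a + (t - a) * s - x j| ^ β j| ≤ M := by
        have := hM (t, s) ⟨⟨ht.1.le, ht.2.le⟩, ⟨hs0, hs1⟩⟩
        rwa [Real.norm_eq_abs] at this
      have hnn : (0:ℝ) ≤ s ^ p * (1 - s) ^ q :=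
        mul_nonneg (Real.rpow_nonneg hs0 p) (Real.rpow_nonneg (by linarith) q)
      calc ‖s ^ p * (1 - s) ^ q * ∏ j ∈ S, |a + (t - a) * s - x j| ^ β j‖
          = s ^ p * (1 - s) ^ q * |∏ j ∈ S, |a + (t - a) * s - x j| ^ β j| := by
            rw [Real.norm_eq_abs, abs_mul, abs_of_nonneg hnn]
        _ ≤ s ^ p * (1 - s) ^ q * M := mul_le_mul_of_nonneg_left hGb hnn
    · exact (betaInt' hβi hβi1).mul_const M
    · refine ae_of_all _ fun s hs => ?_
      have hprod : Tendsto (fun t => ∏ j ∈ S, |a + (t - a) * s - x j| ^ β j) (𝓝 a)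
          (𝓝 (∏ j ∈ S, |a - x j| ^ β j)) := by
        apply tendsto_finset_prod
        intro j hj
        have hcont : ContinuousAt (fun t => |a + (t - a) * s - x j| ^ β j) a := by
          apply ContinuousAt.rpow_const (by fun_prop)
          left
          simpa using abs_ne_zero.2 (sub_ne_zero.2 (Ne.symm (hne j hj)))
        simpa using hcont.tendsto
      exact ((tendsto_const_nhds.mul hprod).mono_left nhdsWithin_le_nhds)
  -- eventual equality
  have heq : ∀ᶠ t in nhdsWithin a (Set.Ioi a),
      (∫ s in (0:ℝ)..1, s ^ p * (1 - s) ^ q * ∏ j ∈ S, |a + (t - a) * s - x j| ^ β j)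
        = (∫ u in a..t, ∏ j ∈ Finset.Icc 1 K, |u - Function.update x (i+1) t j| ^ β j)
          / (t - a) ^ (p + q + 1) := by
    filter_upwards [self_mem_nhdsWithin] with t ht
    have ht' : a < t := ht
    have hsplit : ∀ u : ℝ, ∏ j ∈ Finset.Icc 1 K, |u - Function.update x (i+1) t j| ^ β j
        = |u - a| ^ p * |u - t| ^ q * ∏ j ∈ S, |u - x j| ^ β j := by
      intro u
      rw [← Finset.mul_prod_erase _ _ hiK, ← Finset.mul_prod_erase _ _ hi1mem, ← mul_assoc]
      congr 1
      · rw [Function.update_of_ne (by omega) _ _, Function.update_self]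
      · refine Finset.prod_congr rfl fun j hj => ?_
        rw [Function.update_of_ne (Finset.mem_erase.1 hj).1]
    have hI : (∫ u in a..t, ∏ j ∈ Finset.Icc 1 K, |u - Function.update x (i+1) t j| ^ β j)
        = (t - a) ^ (p + q + 1)
          * ∫ s in (0:ℝ)..1, s ^ p * (1 - s) ^ q * ∏ j ∈ S, |a + (t - a) * s - x j| ^ β j := by
      simp_rw [hsplit]
      exact affineKey' ht' p q (fun u => ∏ j ∈ S, |u - x j| ^ β j)
    rw [hI, mul_comm, mul_div_assoc,
      div_self (Real.rpow_pos_of_pos (sub_pos.2 ht') _).ne', mul_one]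
  -- value of the limit
  have hval : (∫ s in (0:ℝ)..1, s ^ p * (1 - s) ^ q * ∏ j ∈ S, |a - x j| ^ β j)
      = Real.Gamma (p + 1) * Real.Gamma (q + 1) / Real.Gamma (p + q + 2)
        * ∏ j ∈ S, |a - x j| ^ β j := by
    rw [intervalIntegral.integral_mul_const]
    congr 1
    have h := betaVal' (p := p + 1) (q := q + 1) (by linarith) (by linarith)
    simp only [add_sub_cancel_right] at h
    rw [h, (by ring : p + 1 + (q + 1) = p + q + 2)]
  rw [hval] at hDCT
  exact hDCT.congr' heq
end

section
/- Let K ≥ 2 be an integer, let κ ≠ 0 be real, and let α_1,…,α_K and h_1,…,h_K be real numbers. On the chamber {x ∈ ℝ^K : x_1 < x_2 < ⋯ < x_K} define Φ(x) = ∏_{1≤j<k≤K} (x_k−x_j)^{2α_jα_k}. Then for every j ∈ {1,…,K}: (κ/4)∂_j²Φ(x) + Σ_{k≠j} [∂_kΦ(x)/(x_k−x_j) − h_k·Φ(x)/(x_k−x_j)²] = [ Σ_{k≠j, l≠j, k≠l} α_kα_l(κα_j²−1)/((x_k−x_j)(x_l−x_j)) + Σ_{k≠j} (α_jα_k(κα_jα_k−κ/2+2)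 − h_k)/(x_k−x_j)² ] · Φ(x), as an identity of smooth functions on the chamber. -/
open Filter Set Finset
open Topology

noncomputable section

/-- The chamber {x ∈ ℝ^K : x₁ < x₂ < ⋯ < x_K}. -/
def chamber (n : ℕ) : Set (Fin n → ℝ) := {x | ∀ i j : Fin n, i < j → x i < x j}

/-- The partial derivative ∂ⱼ. -/
def pd {n : ℕ} (j : Fin n) (F : (Fin n → ℝ) → ℝ) (x : Fin n → ℝ) : ℝ :=
  fderiv ℝ F x (Pi.single j 1)

/-- The second partial derivative ∂ⱼ². -/
def pd2 {n : ℕ} (j : Fin n) (F : (Fin n → ℝ) → ℝ) (x : Fin n → ℝ) : ℝ :=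
  pd j (fun y => pd j F y) x

/-!
On the chamber every factor of `Φ` is a real power of a positive difference, so `Φ` is
differentiable with logarithmic derivative `∂ₘ log Φ = Tₘ := ∑_{k ≠ m} 2αₘα_k / (xₘ - x_k)`.
Hence `∂ⱼΦ = Tⱼ Φ` and `∂ⱼ²Φ = (Tⱼ² + ∂ⱼTⱼ) Φ`, and after dividing by `Φ` the claim is a rational
identity in the differences `x_k - x_j`. Expanding `Tⱼ²`, splitting the `l = j` term off each
`T_k`, and symmetrising the remaining double sum with the partial fraction identity
`1 / ((a - b) a) + 1 / ((b - a) b) = -1 / (a b)` produces the right-hand side term by term.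
-/

theorem HasFDerivAt.finsetProd_of_logDeriv {ι 𝕜 𝔸 E : Type*} [NontriviallyNormedField 𝕜]
    [NormedCommRing 𝔸] [NormedAlgebra 𝕜 𝔸] [NormedAddCommGroup E] [NormedSpace 𝕜 E]
    [DecidableEq ι] {s : Finset ι} {f : ι → E → 𝔸} {L : ι → E →L[𝕜] 𝔸} {x : E}
    (hf : ∀ i ∈ s, HasFDerivAt (f i) (f i x • L i) x) :
    HasFDerivAt (∏ i ∈ s, f i ·) ((∏ i ∈ s, f i x) • ∑ i ∈ s, L i) x := by
  refine (HasFDerivAt.finsetProd hf).congr_fderiv ?_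
  rw [Finset.smul_sum]
  refine Finset.sum_congr rfl fun i hi => ?_
  rw [smul_smul, Finset.prod_erase_mul s (f · x) hi]

theorem Finset.sq_sum_eq_sum_sum_erase_add_sum_sq {ι R : Type*} [CommSemiring R] [DecidableEq ι]
    (s : Finset ι) (a : ι → R) :
    (∑ i ∈ s, a i) ^ 2 = ∑ i ∈ s, ∑ j ∈ s.erase i, a i * a j + ∑ i ∈ s, a i ^ 2 := by
  rw [sq, sum_mul_sum, ← sum_add_distrib]
  refine sum_congr rfl fun i hi => ?_
  rw [← sum_erase_add s _ hi, sq]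

theorem Finset.sum_sum_erase_comm {ι M : Type*} [AddCommMonoid M] [DecidableEq ι]
    (s : Finset ι) (f : ι → ι → M) :
    ∑ i ∈ s, ∑ j ∈ s.erase i, f i j = ∑ i ∈ s, ∑ j ∈ s.erase i, f j i :=
  sum_comm' fun i j => by simp only [mem_erase]; tauto

theorem two_mul_sum_sum_erase_div_sub_mul_sub {ι F : Type*} [Field F] [DecidableEq ι]
    {s : Finset ι} (a : ι → F) {x : ι → F} {c : F} (hc : ∀ i ∈ s, x i ≠ c)
    (hx : Set.InjOn x s) :
    2 * ∑ i ∈ s, ∑ j ∈ s.erase i, a i * a j / ((x i - x j) * (x i - c))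
      = -∑ i ∈ s, ∑ j ∈ s.erase i, a i * a j / ((x i - c) * (x j - c)) := by
  rw [two_mul]
  nth_rewrite 2 [sum_sum_erase_comm]
  rw [← sum_add_distrib, ← sum_neg_distrib]
  refine sum_congr rfl fun i hi => ?_
  rw [← sum_add_distrib, ← sum_neg_distrib]
  refine sum_congr rfl fun j hj => ?_
  have hij : x i - x j ≠ 0 :=
    sub_ne_zero.mpr fun h => (ne_of_mem_erase hj) (hx (mem_of_mem_erase hj) hi h.symm)
  have hi' : x i - c ≠ 0 := sub_ne_zero.mpr (hc i hi)
  have hj' : x j - c ≠ 0 := sub_ne_zero.mpr (hc j (mem_of_mem_erase hj))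
  have hji : x j - x i ≠ 0 := by rwa [← neg_sub, neg_ne_zero]
  field_simp
  ring

theorem isOpen_chamber (n : ℕ) : IsOpen (chamber n) := by
  simp only [chamber, Set.ofPred_forall]
  exact isOpen_iInter_of_finite fun i => isOpen_iInter_of_finite fun j =>
    isOpen_iInter_of_finite fun _ => isOpen_lt (continuous_apply i) (continuous_apply j)

theorem sub_ne_zero_of_mem_chamber {n : ℕ} {x : Fin n → ℝ} (hx : x ∈ chamber n) {i j : Fin n}
    (h : i ≠ j) : x i - x j ≠ 0 := by
  rcases h.lt_or_gt with h | h
  · exact (sub_neg.mpr (hx i j h)).ne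
  · exact (sub_pos.mpr (hx j i h)).ne'

namespace CoulombGas

variable {K : ℕ} (α : Fin K → ℝ)

def coordDiff (a b : Fin K) : (Fin K → ℝ) →L[ℝ] ℝ :=
  ContinuousLinearMap.proj (R := ℝ) (φ := fun _ => ℝ) a - ContinuousLinearMap.proj b

theorem hasFDerivAt_sub_apply (a b : Fin K) (x : Fin K → ℝ) :
    HasFDerivAt (fun y : Fin K → ℝ => y a - y b) (coordDiff a b) x :=
  (coordDiff a b).hasFDerivAt

theorem coordDiff_single (a b m : Fin K) :
    coordDiff a b (Pi.single m 1) = (if a = m then 1 else 0) - (if b = m then 1 else 0) := by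
  simp [coordDiff, Pi.single_apply]

def product (x : Fin K → ℝ) : ℝ :=
  ∏ k : Fin K, ∏ j : Fin K, if j < k then (x k - x j) ^ (2 * α j * α k) else 1

def factorLogDeriv (x : Fin K → ℝ) (j k : Fin K) : (Fin K → ℝ) →L[ℝ] ℝ :=
  if j < k then (2 * α j * α k / (x k - x j)) • coordDiff k j else 0

def logPartial (m : Fin K) (x : Fin K → ℝ) : ℝ :=
  ∑ k ∈ univ.erase m, 2 * α m * α k / (x m - x k)

variable {α}

theorem hasFDerivAt_factor {x : Fin K → ℝ} (hx : x ∈ chamber K) (j k : Fin K) :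
    HasFDerivAt (fun y : Fin K → ℝ => if j < k then (y k - y j) ^ (2 * α j * α k) else 1)
      ((if j < k then (x k - x j) ^ (2 * α j * α k) else 1) • factorLogDeriv α x j k) x := by
  by_cases hjk : j < k
  · have hpos : 0 < x k - x j := sub_pos.mpr (hx j k hjk)
    simp only [hjk, if_true, factorLogDeriv]
    refine ((Real.hasDerivAt_rpow_const (Or.inl hpos.ne')).comp_hasFDerivAt x
      (hasFDerivAt_sub_apply k j x)).congr_fderiv ?_
    rw [smul_smul, Real.rpow_sub_one hpos.ne']
    congr 1
    ring
  · simpa [hjk, factorLogDeriv] using hasFDerivAt_const (1 : ℝ) x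

theorem hasFDerivAt_product {x : Fin K → ℝ} (hx : x ∈ chamber K) :
    HasFDerivAt (product α) (product α x • ∑ k, ∑ j, factorLogDeriv α x j k) x :=
  HasFDerivAt.finsetProd_of_logDeriv fun k _ =>
    HasFDerivAt.finsetProd_of_logDeriv fun j _ => hasFDerivAt_factor hx j k

theorem sum_sum_factorLogDeriv_single (x : Fin K → ℝ) (m : Fin K) :
    (∑ k, ∑ j, factorLogDeriv α x j k) (Pi.single m 1) = logPartial α m x := by
  set g : Fin K → Fin K → ℝ := fun j k => 2 * α j * α k / (x k - x j)
  have hterm : ∀ k j, factorLogDeriv α x j k (Pi.single m 1)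
      = (if k = m then (if j < m then g j m else 0) else 0)
        - (if j = m then (if m < k then g m k else 0) else 0) := by
    intro k j
    by_cases hjk : j < k
    · simp only [factorLogDeriv, hjk, if_true, smul_apply, coordDiff_single,
        smul_eq_mul]
      rcases eq_or_ne k m with rfl | hk
      · simp [hjk, hjk.ne, g]
      · rcases eq_or_ne j m with rfl | hj
        · simp [hjk, hk, g]
        · simp [hk, hj]
    · simp only [factorLogDeriv, hjk, if_false, zero_apply]
      split_ifs <;> simp_all
  have hsplit : ∀ k, (if k ≠ m then 2 * α m * α k / (x m - x k) else 0)
      = (if k < m then g k m else 0) - (if m < k then g m k else 0) := by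
    intro k
    rcases lt_trichotomy k m with h | rfl | h
    · simp only [if_pos h.ne, if_pos h, if_neg h.not_gt, g, sub_zero]
      ring
    · simp
    · simp only [if_pos h.ne', if_pos h, if_neg h.not_gt, g, zero_sub]
      rw [← neg_sub (x m), div_neg, neg_neg]
  simp only [_root_.sum_apply, hterm, sum_sub_distrib]
  rw [Finset.sum_comm]
  simp only [sum_ite_eq', Finset.mem_univ, if_true]
  rw [logPartial, ← Finset.filter_ne', Finset.sum_filter]
  simp only [hsplit, sum_sub_distrib]

theorem pd_product {x : Fin K → ℝ} (hx : x ∈ chamber K) (m : Fin K) :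
    pd m (product α) x = product α x * logPartial α m x := by
  rw [pd, (hasFDerivAt_product hx).fderiv, smul_apply, smul_eq_mul,
    sum_sum_factorLogDeriv_single]

theorem hasFDerivAt_logPartial {x : Fin K → ℝ} (hx : x ∈ chamber K) (m : Fin K) :
    HasFDerivAt (logPartial α m)
      (∑ k ∈ univ.erase m, (-(2 * α m * α k) / (x m - x k) ^ 2) • coordDiff m k) x := by
  refine HasFDerivAt.fun_sum fun k hk => ?_
  have hne : x m - x k ≠ 0 := sub_ne_zero_of_mem_chamber hx (ne_of_mem_erase hk).symm
  simp only [div_eq_mul_inv]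
  refine (((hasDerivAt_inv hne).comp_hasFDerivAt x (hasFDerivAt_sub_apply m k x)).const_mul
    (2 * α m * α k)).congr_fderiv ?_
  rw [smul_smul, mul_neg, neg_mul]

theorem pd_logPartial {x : Fin K → ℝ} (hx : x ∈ chamber K) (m : Fin K) :
    pd m (logPartial α m) x = -∑ k ∈ univ.erase m, 2 * α m * α k / (x m - x k) ^ 2 := by
  rw [pd, (hasFDerivAt_logPartial hx m).fderiv, _root_.sum_apply, ← sum_neg_distrib]
  refine sum_congr rfl fun k hk => ?_
  simp [coordDiff_single, (ne_of_mem_erase hk), neg_div]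

theorem pd2_product {x : Fin K → ℝ} (hx : x ∈ chamber K) (m : Fin K) :
    pd2 m (product α) x = product α x * (logPartial α m x ^ 2
      - ∑ k ∈ univ.erase m, 2 * α m * α k / (x m - x k) ^ 2) := by
  have hpd : (pd m (product α)) =ᶠ[𝓝 x] (fun y => product α y * logPartial α m y) := by
    filter_upwards [(isOpen_chamber K).mem_nhds hx] with y hy using pd_product hy m
  rw [pd2, pd, hpd.fderiv_eq, fderiv_fun_mul (hasFDerivAt_product hx).differentiableAt
    (hasFDerivAt_logPartial hx m).differentiableAt]
  simp only [add_apply, smul_apply, smul_eq_mul, ← pd.eq_1, pd_product hx, pd_logPartial hx]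
  ring

theorem logPartial_eq_add_sum_erase {x : Fin K → ℝ} {j k : Fin K} (hk : k ∈ univ.erase j) :
    logPartial α k x = 2 * α j * α k / (x k - x j)
      + 2 * ∑ l ∈ (univ.erase j).erase k, α k * α l / (x k - x l) := by
  rw [logPartial, ← add_sum_erase _ _ (mem_erase.mpr ⟨(ne_of_mem_erase hk).symm, mem_univ j⟩),
    erase_right_comm, mul_sum]
  congr 1
  · ring
  · exact sum_congr rfl fun l _ => by ring

theorem sum_logPartial_div_sub {x : Fin K → ℝ} (hx : x ∈ chamber K) (j : Fin K) :
    ∑ k ∈ univ.erase j, logPartial α k x / (x k - x j)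
      = ∑ k ∈ univ.erase j, 2 * α j * α k / (x k - x j) ^ 2
        - ∑ k ∈ univ.erase j, ∑ l ∈ (univ.erase j).erase k,
            α k * α l / ((x k - x j) * (x l - x j)) := by
  have hpf := two_mul_sum_sum_erase_div_sub_mul_sub (s := univ.erase j) α (c := x j)
    (fun k hk => sub_ne_zero.mp (sub_ne_zero_of_mem_chamber hx (ne_of_mem_erase hk)))
    (fun k _ l _ hkl => by_contra fun h => sub_ne_zero_of_mem_chamber hx h (sub_eq_zero.mpr hkl))
  rw [sub_eq_add_neg, ← hpf, mul_sum, ← sum_add_distrib]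
  refine sum_congr rfl fun k hk => ?_
  rw [logPartial_eq_add_sum_erase hk, add_div, div_div, ← sq]
  simp only [mul_sum, sum_div]
  congr 1
  exact sum_congr rfl fun l _ => by rw [mul_div_assoc, div_div]

theorem logPartial_identity (κ : ℝ) (h : Fin K → ℝ) (j : Fin K) {x : Fin K → ℝ}
    (hx : x ∈ chamber K) :
    κ/4 * (logPartial α j x ^ 2 - ∑ k ∈ univ.erase j, 2 * α j * α k / (x j - x k) ^ 2)
      + ∑ k ∈ univ.erase j, (logPartial α k x / (x k - x j) - h k / (x k - x j) ^ 2)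
    = (∑ k ∈ univ.erase j, ∑ l ∈ (univ.erase j).erase k,
        α k * α l * (κ * (α j) ^ 2 - 1) / ((x k - x j) * (x l - x j)))
      + ∑ k ∈ univ.erase j,
        (α j * α k * (κ * α j * α k - κ/2 + 2) - h k) / (x k - x j) ^ 2 := by
  set E := univ.erase j
  have hd : ∀ k ∈ E, x k - x j ≠ 0 := fun k hk =>
    sub_ne_zero_of_mem_chamber hx (ne_of_mem_erase hk)
  have hd' : ∀ k ∈ E, x j - x k ≠ 0 := fun k hk =>
    sub_ne_zero_of_mem_chamber hx (ne_of_mem_erase hk).symm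
  have hsq : logPartial α j x ^ 2
      = ∑ k ∈ E, ∑ l ∈ E.erase k, 2 * α j * α k / (x j - x k) * (2 * α j * α l / (x j - x l))
        + ∑ k ∈ E, (2 * α j * α k / (x j - x k)) ^ 2 :=
    sq_sum_eq_sum_sum_erase_add_sum_sq E _
  have hquad : ∑ k ∈ E, ∑ l ∈ E.erase k,
        α k * α l * (κ * (α j) ^ 2 - 1) / ((x k - x j) * (x l - x j))
      = κ/4 * ∑ k ∈ E, ∑ l ∈ E.erase k,
          2 * α j * α k / (x j - x k) * (2 * α j * α l / (x j - x l))
        - ∑ k ∈ E, ∑ l ∈ E.erase k, α k * α l / ((x k - x j) * (x l - x j)) := by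
    simp only [mul_sum, ← sum_sub_distrib]
    refine sum_congr rfl fun k hk => sum_congr rfl fun l hl => ?_
    have := hd k hk; have := hd l (mem_of_mem_erase hl)
    have := hd' k hk; have := hd' l (mem_of_mem_erase hl)
    field_simp
    ring
  have hdiag : ∑ k ∈ E, (α j * α k * (κ * α j * α k - κ/2 + 2) - h k) / (x k - x j) ^ 2
      = κ/4 * ∑ k ∈ E, (2 * α j * α k / (x j - x k)) ^ 2
        - κ/4 * ∑ k ∈ E, 2 * α j * α k / (x j - x k) ^ 2
        + ∑ k ∈ E, 2 * α j * α k / (x k - x j) ^ 2 - ∑ k ∈ E, h k / (x k - x j) ^ 2 := by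
    simp only [mul_sum, ← sum_sub_distrib, ← sum_add_distrib]
    refine sum_congr rfl fun k hk => ?_
    have := hd k hk; have := hd' k hk
    field_simp
    ring
  rw [sum_sub_distrib, hquad, hdiag, sum_logPartial_div_sub hx, hsq]
  ring

end CoulombGas

theorem coulomb_gas_product_identity_general
    (K : ℕ) (κ : ℝ)
    (α h : Fin K → ℝ)
    (Φ : (Fin K → ℝ) → ℝ)
    (hΦ : ∀ x, Φ x = ∏ k : Fin K, ∏ j : Fin K,
        if j < k then (x k - x j) ^ (2 * α j * α k) else 1)
    (j : Fin K) :
    ∀ x ∈ chamber K,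
      κ/4 * pd2 j Φ x
        + ∑ k ∈ Finset.univ.erase j,
            (pd k Φ x / (x k - x j) - h k * Φ x / (x k - x j)^2)
      = ((∑ k ∈ Finset.univ.erase j, ∑ l ∈ (Finset.univ.erase j).erase k,
            α k * α l * (κ * (α j)^2 - 1) / ((x k - x j) * (x l - x j)))
          + ∑ k ∈ Finset.univ.erase j,
            (α j * α k * (κ * α j * α k - κ/2 + 2) - h k) / (x k - x j)^2) * Φ x := by
  intro x hx
  obtain rfl : Φ = CoulombGas.product α := funext hΦ
  have hfirst : ∑ k ∈ univ.erase j,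
        (pd k (CoulombGas.product α) x / (x k - x j)
          - h k * CoulombGas.product α x / (x k - x j) ^ 2)
      = CoulombGas.product α x * ∑ k ∈ univ.erase j,
          (CoulombGas.logPartial α k x / (x k - x j) - h k / (x k - x j) ^ 2) := by
    rw [mul_sum]
    exact sum_congr rfl fun k _ => by rw [CoulombGas.pd_product hx]; ring
  rw [CoulombGas.pd2_product hx, hfirst, ← CoulombGas.logPartial_identity κ h j hx]
  ring

/-- the algebraic identity satisfied by the Coulomb gas product
Φ(x) = ∏_{j<k} (x_k - x_j)^{2αⱼα_k} under the null-state operator with general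
weights h_k. -/
theorem coulomb_gas_product_identity
    (K : ℕ) (hK : 2 ≤ K) (κ : ℝ) (hκ : κ ≠ 0)
    (α h : Fin K → ℝ)
    (Φ : (Fin K → ℝ) → ℝ)
    (hΦ : ∀ x, Φ x = ∏ k : Fin K, ∏ j : Fin K,
        if j < k then (x k - x j) ^ (2 * α j * α k) else 1)
    (j : Fin K) :
    ∀ x ∈ chamber K,
      κ/4 * pd2 j Φ x
        + ∑ k ∈ Finset.univ.erase j,
            (pd k Φ x / (x k - x j) - h k * Φ x / (x k - x j)^2)
      = ((∑ k ∈ Finset.univ.erase j, ∑ l ∈ (Finset.univ.erase j).erase k,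
            α k * α l * (κ * (α j)^2 - 1) / ((x k - x j) * (x l - x j)))
          + ∑ k ∈ Finset.univ.erase j,
            (α j * α k * (κ * α j * α k - κ/2 + 2) - h k) / (x k - x j)^2) * Φ x :=
  coulomb_gas_product_identity_general K κ α h Φ hΦ j

end
end

section
/- Fix real κ > 0 and integers N ≥ 1 and M ≥ 1; set K = 2N+M. Let α_1,…,α_K be real numbers with α_j = 1/√κ for 1 ≤ j ≤ 2N and α_k ∈ {√κ/2, −2/√κ} for 2N+1 ≤ k ≤ K. On the chamber {x ∈ ℝ^K : x_1 < x_2 < ⋯ < x_K} define Φ(x) = ∏_{1≤j<k≤K} (x_k−x_j)^{2α_jα_k}. Then for every j ∈ {1,…,2N}: (κ/4)∂_j²Φ(x) + Σ_{k=1, k≠j}^{2N} [∂_kΦ(x)/(x_k−x_j) − ((6−κ)/(2κ))·Φ(x)/(x_k−x_j)²] = Σ_{k=2N+1}^{K} ∂_k( −Φ(x)/(x_k−x_j) ), as an identity of smooth functions on the chamber. -/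
open Filter Set Finset

noncomputable section

/-! On the chamber `Φ = exp E` with `E = ∑_{j<k} 2 α_j α_k log (x_k - x_j)`, so `∂_i Φ = Φ G_i`
with `G_i = ∑_{l ≠ i} 2 α_i α_l / (x_i - x_l)` and `∂_j² Φ = Φ (G_j² + ∂_j G_j)`. Dividing by `Φ`,
the null-state expression becomes a rational function of `x`. Expanding `G_j²` and the `G_k`, the
terms involving three distinct points cancel in pairs because `κ α_j² = 1`, and the terms
involving only `x_j` and `x_k` add up to `h_k / (x_k - x_j)²` with `h_k = α_k² + (2 - κ/2) α_j α_k`.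
This weight is `(6 - κ)/(2κ)` for `α_k = 1/√κ` and `1` for both screening charges, and for
`h_k = 1` the `k`-th term is exactly `-∂_k (Φ / (x_k - x_j))`. -/

namespace CoulombGas

open Real Topology

variable {n : ℕ}

lemma isOpen_chamber : IsOpen (chamber n) := by
  simp only [chamber, ofPred_forall]
  exact isOpen_iInter_of_finite fun i => isOpen_iInter_of_finite fun j =>
    isOpen_iInter_of_finite fun _ => isOpen_lt (continuous_apply i) (continuous_apply j)

lemma injective_of_mem_chamber {x : Fin n → ℝ} (hx : x ∈ chamber n) : Function.Injective x :=
  StrictMono.injective hx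

section PartialDerivatives

variable {F G : (Fin n → ℝ) → ℝ} {x : Fin n → ℝ} (i : Fin n)

lemma pd_congr (h : F =ᶠ[𝓝 x] G) : pd i F x = pd i G x := by
  rw [pd, pd, h.fderiv_eq]

lemma pd_neg : pd i (fun y => -F y) x = -pd i F x := by
  simp [pd, fderiv_fun_neg]

lemma pd_mul (hF : DifferentiableAt ℝ F x) (hG : DifferentiableAt ℝ G x) :
    pd i (fun y => F y * G y) x = pd i F x * G x + F x * pd i G x := by
  simp [pd, fderiv_fun_mul hF hG]
  ring

lemma pd_const_mul (c : ℝ) (hF : DifferentiableAt ℝ F x) :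
    pd i (fun y => c * F y) x = c * pd i F x := by
  simp [pd, fderiv_const_mul hF]

lemma pd_sum {ι : Type*} {s : Finset ι} {F : ι → (Fin n → ℝ) → ℝ}
    (hF : ∀ a ∈ s, DifferentiableAt ℝ (F a) x) :
    pd i (fun y => ∑ a ∈ s, F a y) x = ∑ a ∈ s, pd i (F a) x := by
  simp [pd, fderiv_fun_sum hF]

lemma pd_exp (hF : DifferentiableAt ℝ F x) :
    pd i (fun y => exp (F y)) x = exp (F x) * pd i F x := by
  simp [pd, fderiv_exp hF]

lemma differentiableAt_comp_sub {g : ℝ → ℝ} {k j : Fin n}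
    (hg : DifferentiableAt ℝ g (x k - x j)) : DifferentiableAt ℝ (fun y => g (y k - y j)) x :=
  hg.comp x ((differentiableAt_apply k x).sub (differentiableAt_apply j x))

lemma pd_comp_sub {g : ℝ → ℝ} {g' : ℝ} {k j : Fin n} (hg : HasDerivAt g g' (x k - x j)) :
    pd i (fun y => g (y k - y j)) x
      = g' * ((if k = i then 1 else 0) - (if j = i then 1 else 0)) := by
  have h : HasFDerivAt (fun y : Fin n → ℝ => g (y k - y j)) _ x :=
    hg.comp_hasFDerivAt x
      ((hasFDerivAt_apply (𝕜 := ℝ) (F' := fun _ => ℝ) k x).fun_sub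
        (hasFDerivAt_apply (𝕜 := ℝ) (F' := fun _ => ℝ) j x))
  simp [pd, h.fderiv, Pi.single_apply]

lemma differentiableAt_inv_sub {k j : Fin n} (hkj : x k ≠ x j) :
    DifferentiableAt ℝ (fun y : Fin n → ℝ => (y k - y j)⁻¹) x :=
  differentiableAt_comp_sub (g := fun t => t⁻¹) (differentiableAt_inv (sub_ne_zero.2 hkj))

lemma pd_inv_sub {k j : Fin n} (hkj : x k ≠ x j) :
    pd i (fun y => (y k - y j)⁻¹) x
      = -((x k - x j) ^ 2)⁻¹ * ((if k = i then 1 else 0) - (if j = i then 1 else 0)) :=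
  pd_comp_sub i (g := fun t => t⁻¹) (hasDerivAt_inv (sub_ne_zero.2 hkj))

lemma pd_neg_div_sub (hF : DifferentiableAt ℝ F x) {k j : Fin n} (hkj : x k ≠ x j) :
    pd k (fun y => -F y / (y k - y j)) x
      = -(pd k F x / (x k - x j)) + F x / (x k - x j) ^ 2 := by
  simp only [div_eq_mul_inv]
  rw [pd_mul k hF.fun_neg (differentiableAt_inv_sub hkj), pd_neg, pd_inv_sub k hkj]
  have hjk : j ≠ k := by rintro rfl; exact hkj rfl
  simp [hjk]

end PartialDerivatives

def logPotential (α x : Fin n → ℝ) : ℝ :=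
  ∑ k, ∑ j, if j < k then 2 * α j * α k * log (x k - x j) else 0

def logGrad (α : Fin n → ℝ) (i : Fin n) (x : Fin n → ℝ) : ℝ :=
  ∑ l ∈ univ.erase i, 2 * α i * α l / (x i - x l)

lemma prod_rpow_eq_exp_logPotential (α : Fin n → ℝ) {x : Fin n → ℝ}
    (hx : x ∈ chamber n) :
    (∏ k, ∏ j, if j < k then (x k - x j) ^ (2 * α j * α k) else 1)
      = exp (logPotential α x) := by
  simp only [logPotential, exp_sum]
  refine prod_congr rfl fun k _ => prod_congr rfl fun j _ => ?_
  split_ifs with h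
  · rw [rpow_def_of_pos (sub_pos.2 (hx j k h)), mul_comm]
  · exact exp_zero.symm

lemma sum_lt_mul_ite_sub_ite {ι : Type*} [Fintype ι] [LinearOrder ι] (t : ι → ι → ℝ)
    (i : ι) :
    ∑ k, ∑ j, (if j < k then t j k * ((if k = i then 1 else 0) - (if j = i then 1 else 0))
      else 0) = ∑ l ∈ univ.erase i, if l < i then t l i else -t i l := by
  have hsplit : ∀ k j, (if j < k then t j k * ((if k = i then 1 else 0)
      - (if j = i then 1 else 0)) else 0) = (if k = i then (if j < i then t j i else 0) else 0)
        - (if j = i then (if i < k then t i k else 0) else 0) := by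
    intro k j
    by_cases hk : k = i <;> by_cases hj : j = i <;> simp [hk, hj, neg_ite]
  have hterm : ∀ l ∈ univ.erase i, (if l < i then t l i else -t i l)
      = (if l < i then t l i else 0) - (if i < l then t i l else 0) := by
    intro l hl
    rcases lt_trichotomy l i with h | h | h
    · simp [h, h.not_gt]
    · exact absurd h (ne_of_mem_erase hl)
    · simp [h, h.not_gt]
  rw [sum_congr rfl hterm, sum_erase _ (by simp), sum_sub_distrib]
  simp [hsplit, sum_sub_distrib]

section LogPotential

variable (α : Fin n → ℝ) {x : Fin n → ℝ} (hx : x ∈ chamber n)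
include hx

lemma differentiableAt_logPotential_term (k j : Fin n) :
    DifferentiableAt ℝ (fun y => if j < k then 2 * α j * α k * log (y k - y j) else 0) x := by
  split_ifs with h
  · exact differentiableAt_comp_sub
      ((differentiableAt_log (sub_pos.2 (hx j k h)).ne').const_mul _)
  · exact differentiableAt_const _

lemma differentiableAt_logPotential : DifferentiableAt ℝ (logPotential α) x :=
  DifferentiableAt.fun_sum fun k _ => DifferentiableAt.fun_sum fun j _ =>
    differentiableAt_logPotential_term α hx k j

lemma pd_logPotential (i : Fin n) : pd i (logPotential α) x = logGrad α i x := by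
  have hterm : ∀ k j, pd i (fun y => if j < k then 2 * α j * α k * log (y k - y j) else 0) x
      = if j < k then 2 * α j * α k / (x k - x j) *
          ((if k = i then 1 else 0) - (if j = i then 1 else 0)) else 0 := by
    intro k j
    by_cases h : j < k
    · simp only [if_pos h]
      rw [div_eq_mul_inv,
        pd_comp_sub i ((hasDerivAt_log (sub_pos.2 (hx j k h)).ne').const_mul _)]
    · simp [h, pd]
  unfold logPotential
  rw [pd_sum i fun k _ => DifferentiableAt.fun_sum fun j _ =>
    differentiableAt_logPotential_term α hx k j]
  simp only [pd_sum i fun j _ => differentiableAt_logPotential_term α hx _ j, hterm,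
    sum_lt_mul_ite_sub_ite, logGrad]
  refine sum_congr rfl fun l _ => ?_
  split_ifs
  · ring
  · rw [← div_neg, neg_sub]

end LogPotential

section LogGrad

variable (α : Fin n → ℝ) {x : Fin n → ℝ} (hx : Function.Injective x)
include hx

lemma differentiableAt_logGrad (i : Fin n) : DifferentiableAt ℝ (logGrad α i) x := by
  unfold logGrad
  simp_rw [div_eq_mul_inv]
  exact DifferentiableAt.fun_sum fun l hl =>
    (differentiableAt_inv_sub (hx.ne (ne_of_mem_erase hl).symm)).const_mul _

lemma pd_logGrad_self (i : Fin n) :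
    pd i (logGrad α i) x = -∑ l ∈ univ.erase i, 2 * α i * α l / (x i - x l) ^ 2 := by
  unfold logGrad
  simp_rw [div_eq_mul_inv]
  rw [pd_sum i fun l hl =>
      (differentiableAt_inv_sub (hx.ne (ne_of_mem_erase hl).symm)).const_mul _,
    ← sum_neg_distrib]
  refine sum_congr rfl fun l hl => ?_
  have hli : l ≠ i := ne_of_mem_erase hl
  rw [pd_const_mul i _ (differentiableAt_inv_sub (hx.ne hli.symm)),
    pd_inv_sub i (hx.ne hli.symm)]
  simp [hli]

end LogGrad

lemma sum_sum_erase_eq_zero_of_antisymm {ι : Type*} [DecidableEq ι] (s : Finset ι)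
    (f : ι → ι → ℝ) (hf : ∀ k ∈ s, ∀ l ∈ s, k ≠ l → f k l + f l k = 0) :
    ∑ k ∈ s, ∑ l ∈ s.erase k, f k l = 0 := by
  have hswap : ∑ k ∈ s, ∑ l ∈ s.erase k, f k l = ∑ k ∈ s, ∑ l ∈ s.erase k, f l k :=
    sum_comm' fun k l => by simp only [mem_erase]; tauto
  have hdouble : ∑ k ∈ s, ∑ l ∈ s.erase k, (f k l + f l k) = 0 :=
    sum_eq_zero fun k hk => sum_eq_zero fun l hl =>
      hf k hk l (mem_of_mem_erase hl) (ne_of_mem_erase hl).symm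
  rw [sum_congr rfl fun k _ => sum_add_distrib, sum_add_distrib, ← hswap] at hdouble
  linarith

lemma sq_sum_eq_sum_add_sum_erase {ι : Type*} [DecidableEq ι] (s : Finset ι) (a : ι → ℝ) :
    (∑ k ∈ s, a k) ^ 2 = ∑ k ∈ s, (a k ^ 2 + ∑ l ∈ s.erase k, a k * a l) := by
  rw [sq, sum_mul_sum]
  refine sum_congr rfl fun k hk => ?_
  rw [← add_sum_erase _ _ hk, sq]

lemma nullState_twoPoint {κ a b y z : ℝ} (hκ : κ * a ^ 2 = 1) (hyz : y ≠ z) :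
    κ / 4 * ((2 * a * b / (z - y)) ^ 2 - 2 * a * b / (z - y) ^ 2)
      + 2 * b * a / (y - z) / (y - z) = (b ^ 2 + (2 - κ / 2) * a * b) / (y - z) ^ 2 := by
  have ha : a ≠ 0 := by rintro rfl; simp at hκ
  obtain rfl : κ = (a ^ 2)⁻¹ := eq_inv_of_mul_eq_one_left hκ
  have h1 : y - z ≠ 0 := sub_ne_zero.2 hyz
  have h2 : z - y ≠ 0 := sub_ne_zero.2 hyz.symm
  field_simp
  ring

lemma nullState_threePoint {κ a b c y w z : ℝ} (hκ : κ * a ^ 2 = 1) (hyw : y ≠ w)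
    (hyz : y ≠ z) (hwz : w ≠ z) :
    κ / 4 * (2 * a * b / (z - y) * (2 * a * c / (z - w))) + 2 * b * c / (y - w) / (y - z)
      + (κ / 4 * (2 * a * c / (z - w) * (2 * a * b / (z - y))) + 2 * c * b / (w - y) / (w - z))
      = 0 := by
  have ha : a ≠ 0 := by rintro rfl; simp at hκ
  obtain rfl : κ = (a ^ 2)⁻¹ := eq_inv_of_mul_eq_one_left hκ
  have h1 : y - w ≠ 0 := sub_ne_zero.2 hyw
  have h2 : y - z ≠ 0 := sub_ne_zero.2 hyz
  have h3 : w - z ≠ 0 := sub_ne_zero.2 hwz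
  have h4 : w - y ≠ 0 := sub_ne_zero.2 hyw.symm
  have h5 : z - y ≠ 0 := sub_ne_zero.2 hyz.symm
  have h6 : z - w ≠ 0 := sub_ne_zero.2 hwz.symm
  field_simp
  ring

lemma logGrad_nullState_identity {α x : Fin n → ℝ} (hx : Function.Injective x) {κ : ℝ}
    {j : Fin n} (hκ : κ * α j ^ 2 = 1) :
    κ / 4 * (logGrad α j x ^ 2 - ∑ l ∈ univ.erase j, 2 * α j * α l / (x j - x l) ^ 2)
      + ∑ k ∈ univ.erase j, (logGrad α k x / (x k - x j)
          - (α k ^ 2 + (2 - κ / 2) * α j * α k) / (x k - x j) ^ 2) = 0 := by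
  set e := univ.erase j
  have hlogGrad : ∀ k ∈ e, logGrad α k x
      = 2 * α k * α j / (x k - x j) + ∑ l ∈ e.erase k, 2 * α k * α l / (x k - x l) := by
    intro k hk
    rw [logGrad, ← add_sum_erase _ _ (mem_erase.2 ⟨(ne_of_mem_erase hk).symm, mem_univ j⟩),
      erase_right_comm]
  have hthree : ∑ k ∈ e, ∑ l ∈ e.erase k,
      (κ / 4 * (2 * α j * α k / (x j - x k) * (2 * α j * α l / (x j - x l)))
        + 2 * α k * α l / (x k - x l) / (x k - x j)) = 0 :=
    sum_sum_erase_eq_zero_of_antisymm e _ fun k hk l hl hkl =>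
      nullState_threePoint hκ (hx.ne hkl) (hx.ne (ne_of_mem_erase hk))
        (hx.ne (ne_of_mem_erase hl))
  calc _ = ∑ k ∈ e, ((κ / 4 * ((2 * α j * α k / (x j - x k)) ^ 2
              - 2 * α j * α k / (x j - x k) ^ 2) + 2 * α k * α j / (x k - x j) / (x k - x j)
            - (α k ^ 2 + (2 - κ / 2) * α j * α k) / (x k - x j) ^ 2)
          + ∑ l ∈ e.erase k,
            (κ / 4 * (2 * α j * α k / (x j - x k) * (2 * α j * α l / (x j - x l)))
              + 2 * α k * α l / (x k - x l) / (x k - x j))) := by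
        have hGj : logGrad α j x = ∑ k ∈ e, 2 * α j * α k / (x j - x k) := rfl
        rw [hGj, sq_sum_eq_sum_add_sum_erase, ← sum_sub_distrib, mul_sum, ← sum_add_distrib]
        refine sum_congr rfl fun k hk => ?_
        rw [hlogGrad k hk, add_div, sum_div, sum_add_distrib, ← mul_sum _ _ (κ / 4)]
        ring
    _ = 0 := by
        rw [sum_add_distrib, hthree, add_zero]
        exact sum_eq_zero fun k hk =>
          sub_eq_zero.2 (nullState_twoPoint hκ (hx.ne (ne_of_mem_erase hk)))

section NullState

variable {α : Fin n → ℝ} {Φ : (Fin n → ℝ) → ℝ}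
  (hΦ : EqOn Φ (fun y => exp (logPotential α y)) (chamber n)) {x : Fin n → ℝ}
  (hx : x ∈ chamber n)
include hΦ hx

lemma eventuallyEq_exp_logPotential : Φ =ᶠ[𝓝 x] fun y => exp (logPotential α y) :=
  eventuallyEq_of_mem (isOpen_chamber.mem_nhds hx) hΦ

lemma differentiableAt_of_eqOn_exp_logPotential : DifferentiableAt ℝ Φ x :=
  (differentiableAt_logPotential α hx).exp.congr_of_eventuallyEq
    (eventuallyEq_exp_logPotential hΦ hx)

lemma pd_eq_mul_logGrad (i : Fin n) : pd i Φ x = Φ x * logGrad α i x := by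
  rw [pd_congr i (eventuallyEq_exp_logPotential hΦ hx),
    pd_exp i (differentiableAt_logPotential α hx), pd_logPotential α hx, hΦ hx]

lemma pd2_eq_mul_logGrad (j : Fin n) :
    pd2 j Φ x = Φ x * (logGrad α j x ^ 2
      - ∑ l ∈ univ.erase j, 2 * α j * α l / (x j - x l) ^ 2) := by
  have hpd : (fun y => pd j Φ y) =ᶠ[𝓝 x] fun y => Φ y * logGrad α j y :=
    eventuallyEq_of_mem (isOpen_chamber.mem_nhds hx) fun y hy => pd_eq_mul_logGrad hΦ hy j
  have hinj := injective_of_mem_chamber hx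
  rw [pd2, pd_congr j hpd, pd_mul j (differentiableAt_of_eqOn_exp_logPotential hΦ hx)
    (differentiableAt_logGrad α hinj j), pd_eq_mul_logGrad hΦ hx, pd_logGrad_self α hinj]
  ring

theorem nullState_of_eqOn_exp_logPotential {κ : ℝ} {j : Fin n} (hκ : κ * α j ^ 2 = 1) :
    κ / 4 * pd2 j Φ x + ∑ k ∈ univ.erase j, (pd k Φ x / (x k - x j)
      - (α k ^ 2 + (2 - κ / 2) * α j * α k) * Φ x / (x k - x j) ^ 2) = 0 := by
  have hsum : ∑ k ∈ univ.erase j, (pd k Φ x / (x k - x j)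
      - (α k ^ 2 + (2 - κ / 2) * α j * α k) * Φ x / (x k - x j) ^ 2)
      = Φ x * ∑ k ∈ univ.erase j, (logGrad α k x / (x k - x j)
        - (α k ^ 2 + (2 - κ / 2) * α j * α k) / (x k - x j) ^ 2) := by
    rw [mul_sum]
    exact sum_congr rfl fun k _ => by rw [pd_eq_mul_logGrad hΦ hx]; ring
  rw [hsum, pd2_eq_mul_logGrad hΦ hx]
  linear_combination Φ x * logGrad_nullState_identity (injective_of_mem_chamber hx) hκ

end NullState

lemma weight_of_charge_inv {s : ℝ} (hs : s ≠ 0) :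
    (1 / s) ^ 2 + (2 - s ^ 2 / 2) * (1 / s) * (1 / s) = (6 - s ^ 2) / (2 * s ^ 2) := by
  field_simp
  ring

lemma weight_of_screening_charge {s a : ℝ} (hs : s ≠ 0) (ha : a = s / 2 ∨ a = -2 / s) :
    a ^ 2 + (2 - s ^ 2 / 2) * (1 / s) * a = 1 := by
  rcases ha with rfl | rfl <;> field_simp <;> ring

lemma sum_erase_eq_sum_filter_add_sum_filter_not {ι M : Type*} [Fintype ι] [DecidableEq ι]
    [AddCommMonoid M] (p : ι → Prop) [DecidablePred p] {j : ι} (hj : p j) (f : ι → M) :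
    ∑ k ∈ univ.erase j, f k = ∑ k ∈ univ.filter (fun k => p k ∧ k ≠ j), f k
      + ∑ k ∈ univ.filter (fun k => ¬ p k), f k := by
  rw [← sum_filter_add_sum_filter_not _ p]
  congr 2 <;> ext k <;> simp only [mem_filter, mem_erase, Finset.mem_univ, and_true, true_and]
  · exact and_comm
  · exact ⟨And.right, fun hk => ⟨fun hkj => hk (hkj ▸ hj), hk⟩⟩

end CoulombGas

open CoulombGas

theorem null_state_total_derivative_general
    (κ : ℝ) (hκ : 0 < κ) (N M : ℕ)
    (α : Fin (2*N+M) → ℝ)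
    (hα1 : ∀ j : Fin (2*N+M), (j:ℕ) < 2*N → α j = 1/Real.sqrt κ)
    (hα2 : ∀ k : Fin (2*N+M), 2*N ≤ (k:ℕ) →
        α k = Real.sqrt κ / 2 ∨ α k = -2/Real.sqrt κ)
    (Φ : (Fin (2*N+M) → ℝ) → ℝ)
    (hΦ : ∀ x, Φ x = ∏ k : Fin (2*N+M), ∏ j : Fin (2*N+M),
        if j < k then (x k - x j) ^ (2 * α j * α k) else 1)
    (j : Fin (2*N+M)) (hj : (j:ℕ) < 2*N) :
    ∀ x ∈ chamber (2*N+M),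
      κ/4 * pd2 j Φ x
        + ∑ k ∈ Finset.univ.filter (fun k : Fin (2*N+M) => (k:ℕ) < 2*N ∧ k ≠ j),
            (pd k Φ x / (x k - x j) - (6-κ)/(2*κ) * Φ x / (x k - x j)^2)
      = ∑ k ∈ Finset.univ.filter (fun k : Fin (2*N+M) => 2*N ≤ (k:ℕ)),
          pd k (fun y => -Φ y / (y k - y j)) x := by
  intro x hx
  obtain ⟨s, hs, rfl⟩ : ∃ s, 0 < s ∧ κ = s ^ 2 :=
    ⟨√κ, Real.sqrt_pos.2 hκ, (Real.sq_sqrt hκ.le).symm⟩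
  rw [Real.sqrt_sq hs.le] at hα1 hα2
  have hΦexp : EqOn Φ (fun y => Real.exp (logPotential α y)) (chamber (2*N+M)) :=
    fun y hy => (hΦ y).trans (prod_rpow_eq_exp_logPotential α hy)
  have hnull := nullState_of_eqOn_exp_logPotential hΦexp hx (κ := s ^ 2) (j := j)
    (by rw [hα1 j hj]; field_simp)
  rw [sum_erase_eq_sum_filter_add_sum_filter_not (fun k : Fin (2*N+M) => (k:ℕ) < 2*N) hj,
    sum_congr rfl fun k hk => by
      rw [hα1 k (mem_filter.1 hk).2.1, hα1 j hj, weight_of_charge_inv hs.ne']] at hnull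
  simp only [not_lt] at hnull
  have hrhs : ∀ k ∈ univ.filter (fun k : Fin (2*N+M) => 2*N ≤ (k:ℕ)),
      pd k (fun y => -Φ y / (y k - y j)) x
        = -(pd k Φ x / (x k - x j)
          - (α k ^ 2 + (2 - s ^ 2 / 2) * α j * α k) * Φ x / (x k - x j) ^ 2) := by
    intro k hk
    have hkj : x k ≠ x j := (injective_of_mem_chamber hx).ne (by rintro rfl; simp at hk; omega)
    rw [pd_neg_div_sub (differentiableAt_of_eqOn_exp_logPotential hΦexp hx) hkj, hα1 j hj,
      weight_of_screening_charge hs.ne' (hα2 k (mem_filter.1 hk).2)]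
    ring
  rw [sum_congr rfl hrhs, sum_neg_distrib]
  linear_combination hnull

/-- with one-leg charges 1/√κ at the first 2N points and screening
charges √κ/2 or -2/√κ at the last M points, the j-th null-state operator (in the
first 2N variables only) applied to Φ equals a sum of total derivatives in the
screening variables. -/
theorem null_state_total_derivative
    (κ : ℝ) (hκ : 0 < κ) (N M : ℕ) (hN : 1 ≤ N) (hM : 1 ≤ M)
    (α : Fin (2*N+M) → ℝ)
    (hα1 : ∀ j : Fin (2*N+M), (j:ℕ) < 2*N → α j = 1/Real.sqrt κ)
    (hα2 : ∀ k : Fin (2*N+M), 2*N ≤ (k:ℕ) →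
        α k = Real.sqrt κ / 2 ∨ α k = -2/Real.sqrt κ)
    (Φ : (Fin (2*N+M) → ℝ) → ℝ)
    (hΦ : ∀ x, Φ x = ∏ k : Fin (2*N+M), ∏ j : Fin (2*N+M),
        if j < k then (x k - x j) ^ (2 * α j * α k) else 1)
    (j : Fin (2*N+M)) (hj : (j:ℕ) < 2*N) :
    ∀ x ∈ chamber (2*N+M),
      κ/4 * pd2 j Φ x
        + ∑ k ∈ Finset.univ.filter (fun k : Fin (2*N+M) => (k:ℕ) < 2*N ∧ k ≠ j),
            (pd k Φ x / (x k - x j) - (6-κ)/(2*κ) * Φ x / (x k - x j)^2)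
      = ∑ k ∈ Finset.univ.filter (fun k : Fin (2*N+M) => 2*N ≤ (k:ℕ)),
          pd k (fun y => -Φ y / (y k - y j)) x :=
  null_state_total_derivative_general κ hκ N M α hα1 hα2 Φ hΦ j hj

end
end

section
/- Let N ≥ 1 and M ≥ 1 be integers and let p, q be integers with 0 ≤ p ≤ 2N and 0 ≤ q ≤ M; set p' = 2N−p and q' = M−q. Suppose that for every real κ > 0 the following hold: if q ≥ 1 then (4/κ)·(−p+3p'+2(q−1)) − 2(p'+q') = −2, and if q' ≥ 1 then κ(p'+q'−1)/2 − (−p+3p'+2q) = −2. Then exactly one of the following holds: (q' = 0, p' = 1, and M = N−1), or (q' = 1, p' = 0, q = N+1, and M = N+2). -/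
/-- classification of charge assignments in the Coulomb gas
construction.  Among the 2N one-leg charges, p carry α⁺₁,₂ and p' = 2N - p carry
the conjugate charge α⁻₁,₂; among the M screening charges, q carry α⁻ and
q' = M - q carry α⁺.  If the neutrality conditions hold identically in κ > 0,
then exactly one of the two listed configurations occurs. -/
theorem neutrality_classification
    (N M : ℕ) (hN : 1 ≤ N) (hM : 1 ≤ M)
    (p q : ℕ) (hp : p ≤ 2*N) (hq : q ≤ M)
    (hcond : ∀ κ : ℝ, 0 < κ →
      ((1 ≤ q →
          (4/κ) * (-(p:ℝ) + 3*((2*N - p : ℕ) : ℝ) + 2*((q:ℝ) - 1))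
            - 2*(((2*N - p : ℕ) : ℝ) + ((M - q : ℕ) : ℝ)) = -2) ∧
       (1 ≤ M - q →
          κ * (((2*N - p : ℕ) : ℝ) + ((M - q : ℕ) : ℝ) - 1)/2
            - (-(p:ℝ) + 3*((2*N - p : ℕ) : ℝ) + 2*(q:ℝ)) = -2))) :
    Xor' (M - q = 0 ∧ 2*N - p = 1 ∧ M = N - 1)
         (M - q = 1 ∧ 2*N - p = 0 ∧ q = N + 1 ∧ M = N + 2) := by
  have h1 := hcond 1 one_pos
  have h2 := hcond 2 two_pos
  have h4 := hcond 4 (by norm_num)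
  have hPcast : ((2*N - p : ℕ) : ℝ) = 2*(N:ℝ) - p := by
    push_cast [Nat.cast_sub hp]; ring
  rcases Nat.eq_zero_or_pos (M - q) with hq0 | hq1
  · -- q' = 0 case
    have hq1' : 1 ≤ q := by omega
    have e1 := h1.1 hq1'
    have e2 := h2.1 hq1'
    rw [hq0, hPcast] at e1 e2
    push_cast at e1 e2
    have hX : -(p:ℝ) + 3*(2*(N:ℝ) - p) + 2*((q:ℝ) - 1) = 0 := by linarith
    have hP : 2*(N:ℝ) - p = 1 := by linarith
    have hPn : 2*N - p = 1 := by
      have : ((2*N - p : ℕ) : ℝ) = ((1:ℕ):ℝ) := by rw [hPcast]; push_cast; linarith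
      exact_mod_cast this
    have hqM : q = M := by omega
    have hpM : (p:ℝ) = 2*(M:ℝ) + 1 := by
      have : (q:ℝ) = (M:ℝ) := by exact_mod_cast hqM
      linarith
    have hpMn : p = 2*M + 1 := by exact_mod_cast hpM
    refine Or.inl ⟨⟨hq0, hPn, by omega⟩, ?_⟩
    rintro ⟨h, -⟩; omega
  · -- q' ≥ 1 case
    have e2 := h2.2 hq1
    have e4 := h4.2 hq1
    have hQcast : ((M - q : ℕ) : ℝ) = (M:ℝ) - q := by
      push_cast [Nat.cast_sub hq]; ring
    rw [hPcast, hQcast] at e2 e4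
    have hS : (2*(N:ℝ) - p) + ((M:ℝ) - q) - 1 = 0 := by linarith
    have hSn : (2*N - p) + (M - q) = 1 := by
      have : (((2*N - p) + (M - q) : ℕ) : ℝ) = ((1:ℕ):ℝ) := by
        push_cast [Nat.cast_sub hp, Nat.cast_sub hq]; linarith
      exact_mod_cast this
    have hP0 : 2*N - p = 0 := by omega
    have hQ1 : M - q = 1 := by omega
    have hB : -(p:ℝ) + 3*(2*(N:ℝ) - p) + 2*(q:ℝ) = 2 := by linarith
    have hp2N : p = 2*N := by omega
    have hpR : (p:ℝ) = 2*(N:ℝ) := by exact_mod_cast hp2N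
    have hqR : (q:ℝ) = (N:ℝ) + 1 := by linarith
    have hqn : q = N + 1 := by exact_mod_cast hqR
    refine Or.inr ⟨⟨hQ1, hP0, hqn, by omega⟩, ?_⟩
    rintro ⟨h, -⟩; omega
end
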